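/- For every X̂ ∈ ℝ^{2×2} and every X′ ∈ ℝ, the supremum over all ξ ∈ ℝ^{2×2} of ([X̂]·[ξ] + (X′ − y)(det ξ − y))/W(ξ) equals √(‖[X̂]‖² + (X′ − y)²). -/

import Mathlib

open Matrix Filter Topology

attribute [local instance] Matrix.frobeniusSeminormedAddCommGroup
  Matrix.frobeniusNormedAddCommGroup Matrix.frobeniusNormedSpace

abbrev M2 := Matrix (Fin 2) (Fin 2) ℝ

noncomputable section

def E11 : M2 := Matrix.single 0 0 1

def E22 : M2 := Matrix.single 1 1 1

/-- `[ξ]`: the matrix `ξ` with its `(1,1)` entry replaced by `0`. -/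
def br (ξ : M2) : M2 := ξ - ξ 0 0 • E11

/-- `W(ξ) = √(‖[ξ]‖² + (det ξ − y)²)` with the Frobenius norm. -/
def Wf (y : ℝ) (ξ : M2) : ℝ := Real.sqrt (‖br ξ‖ ^ 2 + (ξ.det - y) ^ 2)

end

/-!
Put `v(ξ) := ([ξ], det ξ − y)` and `a := ([X̂], X′ − y)` in `ℝ⁴`. The quotient is then
`⟪a, v(ξ)⟫ / ‖v(ξ)‖`, which Cauchy–Schwarz bounds by `‖a‖`. Conversely, every vector of `ℝ⁴`
with nonzero third coordinate is some `v(ξ)` (solve `det ξ − y = t` for `ξ₁₁`), so the range of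
`v` is dense; since `w ↦ ⟪a, w⟫ / ‖w‖` is continuous at `a` with value `‖a‖`, the supremum is `‖a‖`.
-/

open scoped RealInnerProductSpace

section InnerDivNorm

variable {E : Type*} [NormedAddCommGroup E] [InnerProductSpace ℝ E]

theorem real_inner_div_norm_le_norm (a w : E) : ⟪a, w⟫ / ‖w‖ ≤ ‖a‖ := by
  rcases eq_or_ne w 0 with rfl | hw
  · simp
  · rw [div_le_iff₀ (norm_pos_iff.mpr hw)]
    exact real_inner_le_norm a w

theorem continuousAt_real_inner_div_norm_self (a : E) :
    ContinuousAt (fun w : E => ⟪a, w⟫ / ‖w‖) a := by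
  rcases eq_or_ne a 0 with rfl | ha
  · simpa using continuousAt_const
  · exact (continuous_const.inner continuous_id).continuousAt.div continuous_norm.continuousAt
      (norm_ne_zero_iff.mpr ha)

theorem iSup_real_inner_div_norm_eq_norm {ι : Type*} {v : ι → E} {a : E}
    (ha : a ∈ closure (Set.range v)) : ⨆ i, ⟪a, v i⟫ / ‖v i‖ = ‖a‖ := by
  set f : E → ℝ := fun w => ⟪a, w⟫ / ‖w‖
  have hbdd : BddAbove (Set.range (f ∘ v)) :=
    ⟨‖a‖, Set.forall_mem_range.mpr fun i => real_inner_div_norm_le_norm a (v i)⟩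
  have hfa : f a = ‖a‖ := by
    rcases eq_or_ne a 0 with rfl | ha
    · simp [f]
    · simp [f, sq, norm_ne_zero_iff.mpr ha]
  have hmem : ‖a‖ ∈ closure (Set.range (f ∘ v)) := by
    rw [← hfa, Set.range_comp]
    exact (continuousAt_real_inner_div_norm_self a).continuousWithinAt.mem_closure_image ha
  have : Nonempty ι := Set.range_nonempty_iff_nonempty.mp (closure_nonempty_iff.mp ⟨a, ha⟩)
  refine le_antisymm (ciSup_le fun i => real_inner_div_norm_le_norm a (v i)) ?_
  refine closure_minimal ?_ isClosed_Iic hmem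
  rintro _ ⟨i, rfl⟩
  exact le_ciSup hbdd i

end InnerDivNorm

def brDetVec (A : M2) (t : ℝ) : EuclideanSpace ℝ (Fin 4) := !₂[A 0 1, A 1 0, A 1 1, t]

theorem norm_br_sq (A : M2) : ‖br A‖ ^ 2 = A 0 1 ^ 2 + A 1 0 ^ 2 + A 1 1 ^ 2 := by
  rw [Matrix.frobenius_norm_def, ← Real.sqrt_eq_rpow, Real.sq_sqrt (by positivity)]
  simp [br, E11, Matrix.single, Fin.sum_univ_two]
  ring

theorem norm_brDetVec (A : M2) (t : ℝ) : ‖brDetVec A t‖ = √(‖br A‖ ^ 2 + t ^ 2) := by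
  rw [EuclideanSpace.norm_eq, norm_br_sq]
  simp [brDetVec, Fin.sum_univ_four, add_assoc]

theorem inner_brDetVec (A B : M2) (s t : ℝ) :
    ⟪brDetVec A s, brDetVec B t⟫ = ((br A)ᵀ * br B).trace + s * t := by
  simp [brDetVec, br, E11, Matrix.single, PiLp.inner_apply, Fin.sum_univ_four,
    Matrix.trace_fin_two, Matrix.mul_apply, Fin.sum_univ_two]
  ring

theorem denseRange_brDetVec (y : ℝ) : DenseRange fun ξ : M2 => brDetVec ξ (ξ.det - y) := by
  have hdense : Dense {w : EuclideanSpace ℝ (Fin 4) | w 2 ≠ 0} :=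
    (dense_compl_singleton (0 : ℝ)).preimage (PiLp.isOpenMap_apply 2 _ 2)
  refine hdense.mono fun w (hw : w 2 ≠ 0) => ?_
  let ξ : M2 := !![(w 3 + y + w 0 * w 1) / w 2, w 0; w 1, w 2]
  have hdet : ξ.det - y = w 3 := by
    rw [Matrix.det_fin_two_of, div_mul_cancel₀ _ hw]
    ring
  refine ⟨ξ, ?_⟩
  simp only [hdet]
  ext i
  fin_cases i <;> simp [brDetVec, ξ]

theorem stmt_10_general (y : ℝ) (Xh : M2) (X' : ℝ) :
    (⨆ ξ : M2, (((br Xh)ᵀ * br ξ).trace + (X' - y) * (ξ.det - y)) / Wf y ξ) =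
      Real.sqrt (‖br Xh‖ ^ 2 + (X' - y) ^ 2) := by
  simp only [Wf, ← inner_brDetVec, ← norm_brDetVec]
  exact iSup_real_inner_div_norm_eq_norm (denseRange_brDetVec y _)

/-- ⨆_{ξ} ([X̂]·[ξ] + (X′ − y)(det ξ − y))/W(ξ) = √(‖[X̂]‖² + (X′ − y)²). -/
theorem stmt_10 (y : ℝ) (hy : 0 < y) (Xh : M2) (X' : ℝ) :
    (⨆ ξ : M2, (((br Xh)ᵀ * br ξ).trace + (X' - y) * (ξ.det - y)) / Wf y ξ) =
      Real.sqrt (‖br Xh‖ ^ 2 + (X' - y) ^ 2) :=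
  stmt_10_general y Xh X'
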